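/- arXiv:0801.0695 — 3 statements merged into one kernel-verified Lean document; each statement's English description precedes it below -/
import Mathlib

section
/- Let X be a normed space and let (x_n)_{n≥1} be a sequence in X. Set x*_0 = 0 and x*_n = max_{1≤m≤n} ‖x_m‖ for n ≥ 1, and define v_n = x_n if ‖x_n‖ > 2 x*_{n−1} and v_n = 0 otherwise. Then Σ_{n≥1} ‖v_n‖ ≤ 2 sup_{n≥1} ‖x_n‖ (in particular, if sup_n ‖x_n‖ < ∞ the sum converges). -/
/-!
If a large jump occurs at `n + 1`, then `‖x_{n+1}‖ > 2 x*_n` and `‖x_{n+1}‖ ≤ x*_{n+1}`,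
so `‖v_{n+1}‖ + 2 x*_n ≤ 2 x*_{n+1}`; otherwise `v_{n+1} = 0` and `x*` is monotone.
Summing, the partial sums of `‖v_n‖` are bounded by `2 x*_N ≤ 2 sup ‖x_n‖`.
-/

open scoped ENNReal NNReal Classical

noncomputable section

open Finset

/-- The paper's `x*_n`; the empty sup makes `runningMax a 0 = 0`. -/
def runningMax (a : ℕ → ℝ≥0) (n : ℕ) : ℝ≥0 :=
  (Icc 1 n).sup a

def largeJump (a : ℕ → ℝ≥0) (n : ℕ) : ℝ≥0 :=
  if 2 * runningMax a (n - 1) < a n then a n else 0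

section RunningMax

variable (a : ℕ → ℝ≥0)

theorem runningMax_mono : Monotone (runningMax a) :=
  fun _ _ hmn => sup_mono (Icc_subset_Icc_right hmn)

theorem le_runningMax {n : ℕ} (hn : 1 ≤ n) : a n ≤ runningMax a n :=
  le_sup (mem_Icc.2 ⟨hn, le_rfl⟩)

theorem runningMax_le_iSup (n : ℕ) :
    (runningMax a n : ℝ≥0∞) ≤ ⨆ m, ⨆ (_ : 1 ≤ m), (a m : ℝ≥0∞) := by
  rw [runningMax, ENNReal.coe_finset_sup]
  exact Finset.sup_le fun m hm => le_iSup₂_of_le m (mem_Icc.1 hm).1 le_rfl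

theorem largeJump_succ_add_le (n : ℕ) :
    largeJump a (n + 1) + 2 * runningMax a n ≤ 2 * runningMax a (n + 1) := by
  rw [largeJump, Nat.add_sub_cancel]
  split_ifs with hjump
  · calc a (n + 1) + 2 * runningMax a n ≤ 2 * a (n + 1) := by
          rw [two_mul (a (n + 1))]; gcongr
      _ ≤ 2 * runningMax a (n + 1) := by gcongr; exact le_runningMax a n.succ_pos
  · rw [zero_add]
    gcongr
    exact runningMax_mono a n.le_succ

theorem sum_largeJump_le (N : ℕ) :
    ∑ n ∈ range N, largeJump a (n + 1) ≤ 2 * runningMax a N := by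
  induction N with
  | zero => simp
  | succ N ih =>
    calc ∑ n ∈ range (N + 1), largeJump a (n + 1)
        = largeJump a (N + 1) + ∑ n ∈ range N, largeJump a (n + 1) := by
          rw [sum_range_succ, add_comm]
      _ ≤ largeJump a (N + 1) + 2 * runningMax a N := by gcongr
      _ ≤ 2 * runningMax a (N + 1) := largeJump_succ_add_le a N

theorem tsum_largeJump_le :
    ∑' n, (largeJump a (n + 1) : ℝ≥0∞) ≤
      2 * ⨆ m, ⨆ (_ : 1 ≤ m), (a m : ℝ≥0∞) :=
  ENNReal.tsum_le_of_sum_range_le fun N =>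
    calc ∑ n ∈ range N, (largeJump a (n + 1) : ℝ≥0∞)
        ≤ 2 * runningMax a N := by exact_mod_cast sum_largeJump_le a N
      _ ≤ _ := by gcongr; exact runningMax_le_iSup a N

end RunningMax

theorem davis_large_jump_sum_general (X : Type) [NormedAddCommGroup X]
    (x v : ℕ → X)
    (hv : ∀ n, 1 ≤ n →
      v n = if 2 * ((((Finset.Icc 1 (n - 1)).sup fun m => ‖x m‖₊) : ℝ≥0) : ℝ) < ‖x n‖
        then x n else 0) :
    (∑' n : ℕ, if 1 ≤ n then (‖v n‖₊ : ℝ≥0∞) else 0)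
      ≤ 2 * ⨆ n, ⨆ (_ : 1 ≤ n), (‖x n‖₊ : ℝ≥0∞) := by
  have hv_jump : ∀ n, ‖v (n + 1)‖₊ = largeJump (‖x ·‖₊) (n + 1) := by
    intro n
    have hjump_iff : 2 * (((Icc 1 n).sup (‖x ·‖₊) : ℝ≥0) : ℝ) < ‖x (n + 1)‖ ↔
        2 * (Icc 1 n).sup (‖x ·‖₊) < ‖x (n + 1)‖₊ := by
      rw [← coe_nnnorm]; norm_cast
    rw [hv (n + 1) n.succ_pos, largeJump, runningMax, Nat.add_sub_cancel]
    simp only [hjump_iff]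
    split_ifs <;> simp
  rw [tsum_eq_zero_add' ENNReal.summable]
  simp only [hv_jump]
  simpa using tsum_largeJump_le (‖x ·‖₊)

/-- Let `X` be a normed space and `(x n)_{n ≥ 1}` a sequence in `X`.
With `x*_0 = 0`, `x*_n = max_{1 ≤ m ≤ n} ‖x m‖`, and `v n = x n` when `‖x n‖ > 2 x*_{n-1}`
and `v n = 0` otherwise, one has `Σ_{n ≥ 1} ‖v n‖ ≤ 2 sup_{n ≥ 1} ‖x n‖`
(an inequality in `[0, ∞]`, so in particular the sum converges when the sup is finite). -/
theorem davis_large_jump_sum (X : Type) [NormedAddCommGroup X] [NormedSpace ℝ X]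
    (x v : ℕ → X)
    (hv : ∀ n, 1 ≤ n →
      v n = if 2 * ((((Finset.Icc 1 (n - 1)).sup fun m => ‖x m‖₊) : ℝ≥0) : ℝ) < ‖x n‖
        then x n else 0) :
    (∑' n : ℕ, if 1 ≤ n then (‖v n‖₊ : ℝ≥0∞) else 0)
      ≤ 2 * ⨆ n, ⨆ (_ : 1 ≤ n), (‖x n‖₊ : ℝ≥0∞) :=
  davis_large_jump_sum_general X x v hv

end
end

section
/- Let X be a Banach space, p ∈ [1, ∞) and C ≥ 0. Let (r_n)_{n≥1} and (r̃_n)_{n≥1} be two independent Rademacher sequences (i.i.d. random variables with P(r_n = 1) = P(r_n = −1) = 1/2, the two sequences independent of each other). Then the following are equivalent: (a) for every N ≥ 1 and all functions φ_n : {−1,1}^{n−1} → X (1 ≤ n ≤ N), E‖Σ_{n=1}^N r_n φ_n(r_1, …, r_{n−1})‖^p ≤ C^p E‖Σ_{n=1}^N r̃_n φ_n(r_1, …, r_{n−1})‖^p; (b) for every N ≥ 1 and all functions φ_n : {−1,1}^{n−1} → X (1 ≤ n ≤ N), E‖Σ_{n=1}^N r_n φ_n(r_1, …, r_{n−1})‖^p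 ≤ C^p E‖Σ_{n=1}^N r̃_n r_n φ_n(r_1, …, r_{n−1})‖^p. -/
/-!
Restricted to the indices `1, …, N`, the vector `(r, r')` is a.s. uniformly distributed on the
finite sign cube `{±1}^N × {±1}^N`, by independence. Hence `E F(r, r')` is the average of `F` over
the cube for every function `F`, measurable or not. Since `(ε, δ) ↦ (ε, δ ε)` is an involution of
the cube, `E F(r, r' r) = E F(r, r')`: the two inequalities have the same right-hand side.
-/

open MeasureTheory ProbabilityTheory
open scoped Classical

noncomputable section

section

variable {Ω β ι E : Type*} [MeasurableSpace Ω] {μ : Measure Ω}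
  [NormedAddCommGroup E] [NormedSpace ℝ E] [CompleteSpace E]

def IsRademacher (μ : Measure Ω) (Y : Ω → ℝ) : Prop :=
  μ {ω | Y ω = 1} = 1 / 2 ∧ μ {ω | Y ω = -1} = 1 / 2

def signCube (ι : Type*) [Fintype ι] : Finset (ι → ℝ) :=
  Fintype.piFinset fun _ => {1, -1}

lemma mem_signCube [Fintype ι] {x : ι → ℝ} : x ∈ signCube ι ↔ ∀ i, x i = 1 ∨ x i = -1 := by
  simp [signCube]

lemma IsRademacher.measure_preimage_singleton {Y : Ω → ℝ} (hY : IsRademacher μ Y) {x : ℝ}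
    (hx : x = 1 ∨ x = -1) : μ (Y ⁻¹' {x}) = 2⁻¹ := by
  rw [← one_div]
  rcases hx with rfl | rfl
  exacts [hY.1, hY.2]

lemma IsRademacher.ae_eq_one_or_eq_neg_one [IsProbabilityMeasure μ] {Y : Ω → ℝ}
    (hm : Measurable Y) (hY : IsRademacher μ Y) : ∀ᵐ ω ∂μ, Y ω = 1 ∨ Y ω = -1 := by
  have hdisj : Disjoint {ω | Y ω = 1} {ω | Y ω = -1} :=
    Set.disjoint_left.2 fun ω (h1 : Y ω = 1) (h2 : Y ω = -1) => by norm_num [h1] at h2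
  have hmeas : MeasurableSet {ω | Y ω = 1 ∨ Y ω = -1} :=
    (hm (measurableSet_singleton 1)).union (hm (measurableSet_singleton (-1)))
  rw [ae_iff_measure_eq hmeas.nullMeasurableSet, Set.ofPred_or,
    measure_union hdisj (hm (measurableSet_singleton _)), hY.1, hY.2, measure_univ, one_div,
    ENNReal.inv_two_add_inv_two]

lemma integral_comp_eq_sum_of_ae_mem [IsFiniteMeasure μ] [MeasurableSpace β]
    [MeasurableSingletonClass β] {V : Ω → β} (hV : Measurable V) {S : Finset β}
    (hS : ∀ᵐ ω ∂μ, V ω ∈ S) (F : β → E) :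
    ∫ ω, F (V ω) ∂μ = ∑ x ∈ S, μ.real (V ⁻¹' {x}) • F x := by
  have hpre : ∀ x, MeasurableSet (V ⁻¹' {x}) := fun x => hV (measurableSet_singleton x)
  have hsplit : (fun ω => F (V ω)) =ᵐ[μ]
      fun ω => ∑ x ∈ S, (V ⁻¹' {x}).indicator (fun _ => F x) ω := by
    filter_upwards [hS] with ω hω
    rw [Finset.sum_eq_single_of_mem (V ω) hω fun x _ hx =>
      Set.indicator_of_notMem (show ω ∉ V ⁻¹' {x} from Ne.symm hx) _]
    exact (Set.indicator_of_mem rfl _).symm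
  rw [integral_congr_ae hsplit,
    integral_finsetSum _ fun x _ => (integrable_const _).indicator (hpre x)]
  exact Finset.sum_congr rfl fun x _ => integral_indicator_const _ (hpre x)

lemma ProbabilityTheory.iIndepFun.measureReal_preimage_eq_of_mem_signCube [Fintype ι]
    [IsProbabilityMeasure μ] {Y : ι → Ω → ℝ} (hind : iIndepFun Y μ)
    (hY : ∀ i, IsRademacher μ (Y i)) {x : ι → ℝ} (hx : x ∈ signCube ι) :
    μ.real ((fun ω i => Y i ω) ⁻¹' {x}) = 2⁻¹ ^ Fintype.card ι := by
  have hatom : (fun ω i => Y i ω) ⁻¹' {x} = ⋂ i ∈ Finset.univ, Y i ⁻¹' {x i} := by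
    ext ω
    simp [funext_iff]
  rw [measureReal_def, hatom,
    hind.measure_inter_preimage_eq_mul _ fun i _ => measurableSet_singleton _,
    Finset.prod_congr rfl fun i _ => (hY i).measure_preimage_singleton (mem_signCube.1 hx i),
    Finset.prod_const, Finset.card_univ, ENNReal.toReal_pow, ENNReal.toReal_inv,
    ENNReal.toReal_ofNat]

theorem integral_comp_eq_smul_sum_signCube [Fintype ι] [IsProbabilityMeasure μ]
    {Y : ι → Ω → ℝ} (hm : ∀ i, Measurable (Y i)) (hind : iIndepFun Y μ)
    (hY : ∀ i, IsRademacher μ (Y i)) (F : (ι → ℝ) → E) :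
    ∫ ω, F (fun i => Y i ω) ∂μ = (2⁻¹ : ℝ) ^ Fintype.card ι • ∑ x ∈ signCube ι, F x := by
  have hcube : ∀ᵐ ω ∂μ, (fun i => Y i ω) ∈ signCube ι := by
    simpa only [mem_signCube] using ae_all_iff.2 fun i => (hY i).ae_eq_one_or_eq_neg_one (hm i)
  rw [integral_comp_eq_sum_of_ae_mem (measurable_pi_lambda _ hm) hcube, Finset.smul_sum]
  exact Finset.sum_congr rfl fun x hx => by
    rw [hind.measureReal_preimage_eq_of_mem_signCube hY hx]

def signTwist (x : ι ⊕ ι → ℝ) : ι ⊕ ι → ℝ :=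
  Sum.elim (x ∘ Sum.inl) fun i => x (Sum.inr i) * x (Sum.inl i)

lemma signTwist_mem_signCube [Fintype ι] {x : ι ⊕ ι → ℝ} (hx : x ∈ signCube (ι ⊕ ι)) :
    signTwist x ∈ signCube (ι ⊕ ι) := by
  rw [mem_signCube] at hx ⊢
  rintro (i | i)
  · exact hx (Sum.inl i)
  · rcases hx (Sum.inl i) with h | h <;> rcases hx (Sum.inr i) with h' | h' <;>
      simp [signTwist, h, h']

lemma signTwist_signTwist [Fintype ι] {x : ι ⊕ ι → ℝ} (hx : x ∈ signCube (ι ⊕ ι)) :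
    signTwist (signTwist x) = x := by
  rw [mem_signCube] at hx
  ext (i | i)
  · rfl
  · rcases hx (Sum.inl i) with h | h <;> simp [signTwist, h]

theorem integral_comp_mul_rademacher [Fintype ι] [IsProbabilityMeasure μ]
    {Z : ι ⊕ ι → Ω → ℝ} (hm : ∀ j, Measurable (Z j)) (hind : iIndepFun Z μ)
    (hZ : ∀ j, IsRademacher μ (Z j)) (G : (ι → ℝ) → (ι → ℝ) → E) :
    ∫ ω, G (fun i => Z (.inl i) ω) (fun i => Z (.inr i) ω * Z (.inl i) ω) ∂μ
      = ∫ ω, G (fun i => Z (.inl i) ω) (fun i => Z (.inr i) ω) ∂μ := by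
  calc _ = (2⁻¹ : ℝ) ^ Fintype.card (ι ⊕ ι) •
        ∑ x ∈ signCube (ι ⊕ ι), G (x ∘ .inl) (signTwist x ∘ .inr) :=
      integral_comp_eq_smul_sum_signCube hm hind hZ fun x => G (x ∘ .inl) (signTwist x ∘ .inr)
    _ = (2⁻¹ : ℝ) ^ Fintype.card (ι ⊕ ι) • ∑ x ∈ signCube (ι ⊕ ι), G (x ∘ .inl) (x ∘ .inr) := by
      congr 1
      exact Finset.sum_nbij' signTwist signTwist (fun x hx => signTwist_mem_signCube hx)
        (fun x hx => signTwist_mem_signCube hx) (fun x hx => signTwist_signTwist hx)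
        (fun x hx => signTwist_signTwist hx) fun x _ => rfl
    _ = _ := (integral_comp_eq_smul_sum_signCube hm hind hZ fun x => G (x ∘ .inl) (x ∘ .inr)).symm

end

theorem paleyWalsh_decoupling_iff_randomization_general (X : Type) [NormedAddCommGroup X]
    [NormedSpace ℝ X] (p C : ℝ)
    (Ω : Type) (m0 : MeasurableSpace Ω) (μ : Measure Ω) [IsProbabilityMeasure μ]
    (r r' : ℕ → Ω → ℝ)
    (hm : ∀ i : ℕ ⊕ ℕ, Measurable (Sum.elim r r' i))
    (hindep : iIndepFun (Sum.elim r r') μ)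
    (hdist : ∀ i : ℕ ⊕ ℕ, μ {ω | Sum.elim r r' i ω = 1} = 1 / 2 ∧
      μ {ω | Sum.elim r r' i ω = -1} = 1 / 2) :
    (∀ N, 1 ≤ N → ∀ φ : (n : ℕ) → ({ m // m ∈ Finset.Ico 1 n } → ℝ) → X,
        ∫ ω, ‖∑ n ∈ Finset.Icc 1 N, r n ω • φ n fun k => r k.1 ω‖ ^ p ∂μ
          ≤ C ^ p * ∫ ω, ‖∑ n ∈ Finset.Icc 1 N, r' n ω • φ n fun k => r k.1 ω‖ ^ p ∂μ)
      ↔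
    (∀ N, 1 ≤ N → ∀ φ : (n : ℕ) → ({ m // m ∈ Finset.Ico 1 n } → ℝ) → X,
        ∫ ω, ‖∑ n ∈ Finset.Icc 1 N, r n ω • φ n fun k => r k.1 ω‖ ^ p ∂μ
          ≤ C ^ p *
            ∫ ω, ‖∑ n ∈ Finset.Icc 1 N, (r' n ω * r n ω) • φ n fun k => r k.1 ω‖ ^ p ∂μ) := by
  suffices h : ∀ N, ∀ φ : (n : ℕ) → ({ m // m ∈ Finset.Ico 1 n } → ℝ) → X,
      ∫ ω, ‖∑ n ∈ Finset.Icc 1 N, (r' n ω * r n ω) • φ n fun k => r k.1 ω‖ ^ p ∂μ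
        = ∫ ω, ‖∑ n ∈ Finset.Icc 1 N, r' n ω • φ n fun k => r k.1 ω‖ ^ p ∂μ by
    simp only [h]
  intro N φ
  have hsub : ∀ n : Finset.Icc 1 N, ∀ k ∈ Finset.Ico 1 n.1, k ∈ Finset.Icc 1 N := fun n k hk =>
    Finset.Ico_subset_Icc_self.trans (Finset.Icc_subset_Icc_right (Finset.mem_Icc.1 n.2).2) hk
  have hinj :
      (Sum.map Subtype.val Subtype.val : Finset.Icc 1 N ⊕ Finset.Icc 1 N → ℕ ⊕ ℕ).Injective :=
    Sum.map_injective.2 ⟨Subtype.val_injective, Subtype.val_injective⟩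
  have htwist := integral_comp_mul_rademacher (μ := μ) (fun j => hm _) (hindep.precomp hinj)
    (fun j => hdist _) fun a b : Finset.Icc 1 N → ℝ =>
      ‖∑ n ∈ (Finset.Icc 1 N).attach, b n • φ n fun k => a ⟨k, hsub n k k.2⟩‖ ^ p
  convert htwist using 5 <;> exact (Finset.sum_attach _ _).symm

/-- Equivalence of the decoupling inequality and Garling's
randomization inequality for Paley–Walsh martingales: given two independent Rademacher
sequences `(r n)` and `(r' n)`, the inequality
`E‖Σ r_n φ_n(r_1,…,r_{n-1})‖^p ≤ C^p E‖Σ r'_n φ_n(r_1,…,r_{n-1})‖^p` (for all `N ≥ 1` and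
all `φ`) holds iff
`E‖Σ r_n φ_n(r_1,…,r_{n-1})‖^p ≤ C^p E‖Σ r'_n r_n φ_n(r_1,…,r_{n-1})‖^p` (for all `N ≥ 1`
and all `φ`). -/
theorem paleyWalsh_decoupling_iff_randomization (X : Type) [NormedAddCommGroup X]
    [NormedSpace ℝ X] [CompleteSpace X] (p C : ℝ) (hp : 1 ≤ p) (hC : 0 ≤ C)
    (Ω : Type) (m0 : MeasurableSpace Ω) (μ : Measure Ω) [IsProbabilityMeasure μ]
    (hμ : μ.IsComplete)
    (r r' : ℕ → Ω → ℝ)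
    (hm : ∀ i : ℕ ⊕ ℕ, Measurable (Sum.elim r r' i))
    (hindep : iIndepFun (Sum.elim r r') μ)
    (hdist : ∀ i : ℕ ⊕ ℕ, μ {ω | Sum.elim r r' i ω = 1} = 1 / 2 ∧
      μ {ω | Sum.elim r r' i ω = -1} = 1 / 2) :
    (∀ N, 1 ≤ N → ∀ φ : (n : ℕ) → ({ m // m ∈ Finset.Ico 1 n } → ℝ) → X,
        ∫ ω, ‖∑ n ∈ Finset.Icc 1 N, r n ω • φ n fun k => r k.1 ω‖ ^ p ∂μ
          ≤ C ^ p * ∫ ω, ‖∑ n ∈ Finset.Icc 1 N, r' n ω • φ n fun k => r k.1 ω‖ ^ p ∂μ)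
      ↔
    (∀ N, 1 ≤ N → ∀ φ : (n : ℕ) → ({ m // m ∈ Finset.Ico 1 n } → ℝ) → X,
        ∫ ω, ‖∑ n ∈ Finset.Icc 1 N, r n ω • φ n fun k => r k.1 ω‖ ^ p ∂μ
          ≤ C ^ p *
            ∫ ω, ‖∑ n ∈ Finset.Icc 1 N, (r' n ω * r n ω) • φ n fun k => r k.1 ω‖ ^ p ∂μ) :=
  paleyWalsh_decoupling_iff_randomization_general X p C Ω m0 μ r r' hm hindep hdist

end
end

section
/- Let X be an arbitrary Banach space, let (d_n)_{n≥1} be a martingale difference sequence of essentially bounded X-valued random variables, and let (e_n)_{n≥1} be a decoupled tangent sequence of (d_n). Then for every N ≥ 1, ess sup ‖Σ_{n=1}^N d_n‖ ≤ ess sup ‖Σ_{n=1}^N e_n‖; that is, the decoupling inequality holds for p = ∞ with constant 1 in every Banach space. -/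
open MeasureTheory ProbabilityTheory
open scoped ENNReal NNReal Classical

noncomputable section

/-- The real-valued indicator of the event `{ω | f ω ∈ A}`. -/
def evInd {Ω X : Type} (f : Ω → X) (A : Set X) : Ω → ℝ :=
  (f ⁻¹' A).indicator fun _ => (1 : ℝ)

/-- `(d n)_{n ≥ 1}` is a martingale difference sequence with respect to `ℱ` and `μ`. -/
def IsMDS {Ω X : Type} [NormedAddCommGroup X] [NormedSpace ℝ X] [CompleteSpace X]
    {m0 : MeasurableSpace Ω} (μ : Measure Ω) (ℱ : Filtration ℕ m0)
    (d : ℕ → Ω → X) : Prop :=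
  (∀ n, 1 ≤ n → StronglyMeasurable[ℱ n] (d n)) ∧
  (∀ n, 1 ≤ n → Integrable (d n) μ) ∧
  (∀ n, 1 ≤ n → μ[d n | ℱ (n - 1)] =ᵐ[μ] 0)

/-- `(d n)_{n ≥ 1}` is adapted to `ℱ`. -/
def Adapted1 {Ω X : Type} [TopologicalSpace X] {m0 : MeasurableSpace Ω}
    (ℱ : Filtration ℕ m0) (d : ℕ → Ω → X) : Prop :=
  ∀ n, 1 ≤ n → StronglyMeasurable[ℱ n] (d n)

/-- The sequences `(d n)_{n ≥ 1}` and `(e n)_{n ≥ 1}` are tangent. -/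
def AreTangent {Ω X : Type} [MeasurableSpace X] {m0 : MeasurableSpace Ω}
    (μ : Measure Ω) (ℱ : Filtration ℕ m0) (d e : ℕ → Ω → X) : Prop :=
  ∀ n, 1 ≤ n → ∀ A : Set X, MeasurableSet A →
    μ[evInd (d n) A | ℱ (n - 1)] =ᵐ[μ] μ[evInd (e n) A | ℱ (n - 1)]

/-- The sequence `(e n)_{n ≥ 1}` satisfies the (CI) condition. -/
def SatisfiesCI {Ω X : Type} [MeasurableSpace X] {m0 : MeasurableSpace Ω}
    (μ : Measure Ω) (ℱ : Filtration ℕ m0) (e : ℕ → Ω → X) : Prop :=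
  ∃ 𝒢 : MeasurableSpace Ω,
    𝒢 ≤ (⨆ n, (ℱ n : MeasurableSpace Ω)) ∧
    (∀ n, 1 ≤ n → ∀ A : Set X, MeasurableSet A →
      μ[evInd (e n) A | ℱ (n - 1)] =ᵐ[μ] μ[evInd (e n) A | 𝒢]) ∧
    (∀ n, 1 ≤ n → ∀ A : ℕ → Set X, (∀ i, MeasurableSet (A i)) →
      μ[fun ω => ∏ i ∈ Finset.Icc 1 n, evInd (e i) (A i) ω | 𝒢]
        =ᵐ[μ] fun ω => ∏ i ∈ Finset.Icc 1 n, (μ[evInd (e i) (A i) | 𝒢]) ω)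

/-- `(e n)_{n ≥ 1}` is a decoupled tangent sequence of `(d n)_{n ≥ 1}`:
it is adapted, tangent to `(d n)`, and satisfies the (CI) condition. -/
def IsDecoupledTangent {Ω X : Type} [NormedAddCommGroup X] [MeasurableSpace X]
    {m0 : MeasurableSpace Ω} (μ : Measure Ω) (ℱ : Filtration ℕ m0)
    (d e : ℕ → Ω → X) : Prop :=
  Adapted1 ℱ e ∧ AreTangent μ ℱ d e ∧ SatisfiesCI μ ℱ e

/-- The decoupling inequality for exponent `p` with constant `C`, over all complete
filtered probability spaces. -/
def DecIneq (X : Type) [NormedAddCommGroup X] [NormedSpace ℝ X] [CompleteSpace X]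
    [MeasurableSpace X] [BorelSpace X] (p C : ℝ) : Prop :=
  ∀ (Ω : Type) (m0 : MeasurableSpace Ω) (μ : Measure Ω),
    IsProbabilityMeasure μ → μ.IsComplete →
    ∀ (ℱ : Filtration ℕ m0) (d e : ℕ → Ω → X),
      IsMDS μ ℱ d → (∀ n, 1 ≤ n → MemLp (d n) (ENNReal.ofReal p) μ) →
      IsDecoupledTangent μ ℱ d e →
      ∀ N, 1 ≤ N →
        (∫ ω, ‖∑ n ∈ Finset.Icc 1 N, d n ω‖ ^ p ∂μ) ^ (1 / p)
          ≤ C * (∫ ω, ‖∑ n ∈ Finset.Icc 1 N, e n ω‖ ^ p ∂μ) ^ (1 / p)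

/-- `X` has the decoupling property for tangent martingale difference sequences. -/
def DecouplingProperty (X : Type) [NormedAddCommGroup X] [NormedSpace ℝ X] [CompleteSpace X]
    [MeasurableSpace X] [BorelSpace X] : Prop :=
  ∀ p : ℝ, 1 ≤ p → ∃ C : ℝ, DecIneq X p C

/-- `X` is a UMD Banach space. -/
def HasUMD (X : Type) [NormedAddCommGroup X] [NormedSpace ℝ X] [CompleteSpace X] : Prop :=
  ∀ p : ℝ, 1 < p → ∃ β : ℝ, 1 ≤ β ∧
    ∀ (Ω : Type) (m0 : MeasurableSpace Ω) (μ : Measure Ω), IsProbabilityMeasure μ →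
    ∀ (ℱ : Filtration ℕ m0) (d : ℕ → Ω → X),
      IsMDS μ ℱ d → (∀ n, 1 ≤ n → MemLp (d n) (ENNReal.ofReal p) μ) →
      ∀ ε : ℕ → ℝ, (∀ n, ε n = 1 ∨ ε n = -1) →
      ∀ N, 1 ≤ N →
        (∫ ω, ‖∑ n ∈ Finset.Icc 1 N, ε n • d n ω‖ ^ p ∂μ) ^ (1 / p)
          ≤ β * (∫ ω, ‖∑ n ∈ Finset.Icc 1 N, d n ω‖ ^ p ∂μ) ^ (1 / p)

/-!
Fix balls `B₁, …, B_N`. Almost surely on `{d_n ∈ B_n}` the conditional probability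
`P(d_n ∈ B_n | ℱ_{n-1})` is positive; by tangency and (CI) it equals `P(e_n ∈ B_n | 𝒢)`, and the
product of these is `P(e_1 ∈ B_1, …, e_N ∈ B_N | 𝒢)`. Hence, almost surely, every product of
balls containing `(d_1(ω), …, d_N(ω))` is charged by the law of `(e_1, …, e_N)`; since the
ranges of the `d_n` are separable, countably many balls suffice. So `(d_1(ω), …, d_N(ω))` lies
a.s. in the support of that law, and thus in the closed set `{x | ‖x_1 + ⋯ + x_N‖ ≤ M}`, where
`M` is the essential supremum of `‖e_1 + ⋯ + e_N‖`.
-/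

open Metric in
theorem ae_mem_of_measure_preimage_ball_ne_zero {Ω Y : Type} [PseudoMetricSpace Y]
    {m0 : MeasurableSpace Ω} {μ : Measure Ω} {f g : Ω → Y} {S : Set Y} (hS : S.Countable)
    (hfS : Set.range f ⊆ closure S)
    (hpos : ∀ z ∈ S, ∀ k : ℕ, ∀ᵐ ω ∂μ,
      f ω ∈ ball z (1 / (k + 1)) → μ (g ⁻¹' ball z (1 / (k + 1))) ≠ 0)
    {F : Set Y} (hF : IsClosed F) (hg : ∀ᵐ ω ∂μ, g ω ∈ F) :
    ∀ᵐ ω ∂μ, f ω ∈ F := by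
  have hpos_ae : ∀ᵐ ω ∂μ, ∀ z ∈ S, ∀ k : ℕ,
      f ω ∈ ball z (1 / (k + 1)) → μ (g ⁻¹' ball z (1 / (k + 1))) ≠ 0 :=
    (ae_ball_iff hS).2 fun z hz => ae_all_iff.2 (hpos z hz)
  filter_upwards [hpos_ae] with ω hω
  by_contra hfF
  obtain ⟨ε, hε, hballF⟩ := isOpen_iff.1 hF.isOpen_compl (f ω) hfF
  obtain ⟨k, hk⟩ := exists_nat_one_div_lt (half_pos hε)
  obtain ⟨z, hzS, hfz⟩ := mem_closure_iff.1 (hfS (Set.mem_range_self ω)) _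
    (Nat.one_div_pos_of_nat (n := k))
  have hsub : ball z (1 / (k + 1)) ⊆ Fᶜ := fun y hy =>
    hballF <| calc dist y (f ω) ≤ dist y z + dist (f ω) z := dist_triangle_right _ _ _
      _ < ε := by rw [mem_ball] at hy; linarith
  exact hω z hzS k (mem_ball.2 hfz) (measure_mono_null (fun _ h => hsub h) hg)

theorem ae_pos_condExp_indicator_one {Ω : Type} {m m0 : MeasurableSpace Ω} {μ : Measure Ω}
    [IsFiniteMeasure μ] (hm : m ≤ m0) {s : Set Ω} (hs : MeasurableSet s) :
    ∀ᵐ ω ∂μ, ω ∈ s → 0 < μ[s.indicator (fun _ => (1 : ℝ)) | m] ω := by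
  set g := μ[s.indicator (fun _ => (1 : ℝ)) | m]
  set T := {ω | g ω ≤ 0}
  have hT : MeasurableSet[m] T :=
    measurableSet_le stronglyMeasurable_condExp.measurable measurable_const
  have hint : ∫ ω in T, g ω ∂μ = μ.real (T ∩ s) := by
    rw [setIntegral_condExp hm ((integrable_const 1).indicator hs) hT,
      setIntegral_indicator hs, setIntegral_const, smul_eq_mul, mul_one]
  have hnull : μ (T ∩ s) = 0 := by
    refine (measureReal_eq_zero_iff).1 (le_antisymm ?_ measureReal_nonneg)
    exact hint ▸ setIntegral_nonpos (hm _ hT) fun ω hω => hω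
  rw [ae_iff]
  refine measure_mono_null (fun ω hω => ?_) hnull
  simp only [Set.mem_ofPred_eq, Classical.not_imp, not_lt] at hω
  exact ⟨hω.2, hω.1⟩

theorem ae_measure_setOf_forall_mem_ne_zero {Ω X : Type} [MeasurableSpace X]
    {m0 : MeasurableSpace Ω} {μ : Measure Ω} [IsFiniteMeasure μ] {ℱ : Filtration ℕ m0}
    {d e : ℕ → Ω → X} (hd : ∀ n, 1 ≤ n → Measurable (d n)) (htan : AreTangent μ ℱ d e)
    (hCI : SatisfiesCI μ ℱ e) {N : ℕ} (hN : 1 ≤ N) {A : ℕ → Set X}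
    (hA : ∀ n, MeasurableSet (A n)) :
    ∀ᵐ ω ∂μ, (∀ n ∈ Finset.Icc 1 N, d n ω ∈ A n) →
      μ {ω' | ∀ n ∈ Finset.Icc 1 N, e n ω' ∈ A n} ≠ 0 := by
  obtain ⟨𝒢, -, hCI_marg, hCI_prod⟩ := hCI
  set E := {ω' | ∀ n ∈ Finset.Icc 1 N, e n ω' ∈ A n}
  have hmarg : ∀ᵐ ω ∂μ, ∀ n ∈ Finset.Icc 1 N,
      d n ω ∈ A n → 0 < μ[evInd (e n) (A n) | 𝒢] ω := by
    refine Filter.eventually_all_finset _ |>.2 fun n hn => ?_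
    have hn1 : 1 ≤ n := (Finset.mem_Icc.1 hn).1
    filter_upwards [ae_pos_condExp_indicator_one (ℱ.le (n - 1)) (hd n hn1 (hA n)),
      (htan n hn1 (A n) (hA n)).trans (hCI_marg n hn1 (A n) (hA n))] with ω hpos heq
    exact heq ▸ hpos
  by_cases hE : μ E = 0
  · have hind : (fun ω => ∏ n ∈ Finset.Icc 1 N, evInd (e n) (A n) ω) =ᵐ[μ] 0 := by
      filter_upwards [measure_eq_zero_iff_ae_notMem.1 hE] with ω hω
      obtain ⟨n, hn, hnA⟩ : ∃ n ∈ Finset.Icc 1 N, e n ω ∉ A n := by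
        simpa [E, and_assoc] using hω
      exact Finset.prod_eq_zero hn (Set.indicator_of_notMem (s := e n ⁻¹' A n) hnA _)
    have hprod : (fun ω => ∏ n ∈ Finset.Icc 1 N, μ[evInd (e n) (A n) | 𝒢] ω) =ᵐ[μ] 0 :=
      (hCI_prod N hN A hA).symm.trans ((condExp_congr_ae hind).trans (by rw [condExp_zero]))
    filter_upwards [hmarg, hprod] with ω hmarg hprod hdA
    exact absurd hprod (Finset.prod_pos fun n hn => hmarg n hn (hdA n hn)).ne'
  · exact ae_of_all _ fun _ _ => hE

open Metric in
theorem ae_measure_preimage_ball_pi_ne_zero {Ω X : Type} [PseudoMetricSpace X]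
    [MeasurableSpace X] [OpensMeasurableSpace X] {m0 : MeasurableSpace Ω} {μ : Measure Ω}
    [IsFiniteMeasure μ] {ℱ : Filtration ℕ m0} {d e : ℕ → Ω → X}
    (hd : ∀ n, 1 ≤ n → Measurable (d n)) (htan : AreTangent μ ℱ d e)
    (hCI : SatisfiesCI μ ℱ e) {N : ℕ} (hN : 1 ≤ N) (z : Finset.Icc 1 N → X) {r : ℝ}
    (hr : 0 < r) :
    ∀ᵐ ω ∂μ, (fun n : Finset.Icc 1 N => d n ω) ∈ ball z r →
      μ ((fun ω' (n : Finset.Icc 1 N) => e n ω') ⁻¹' ball z r) ≠ 0 := by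
  let z' : ℕ → X := fun n => if h : n ∈ Finset.Icc 1 N then z ⟨n, h⟩ else z ⟨1, by simp [hN]⟩
  have hmem : ∀ x : ℕ → X, (fun n : Finset.Icc 1 N => x n) ∈ ball z r ↔
      ∀ n ∈ Finset.Icc 1 N, x n ∈ ball (z' n) r := fun x => by
    simp only [ball_pi _ hr, Set.mem_univ_pi, Subtype.forall]
    exact forall₂_congr fun n hn => by simp only [z', dif_pos hn]
  have hpreimage : (fun ω' (n : Finset.Icc 1 N) => e n ω') ⁻¹' ball z r =
      {ω' | ∀ n ∈ Finset.Icc 1 N, e n ω' ∈ ball (z' n) r} :=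
    Set.ext fun ω' => hmem (e · ω')
  filter_upwards [ae_measure_setOf_forall_mem_ne_zero hd htan hCI hN
    (A := fun n => ball (z' n) r) fun _ => measurableSet_ball] with ω hω hdω
  exact hpreimage ▸ hω ((hmem (d · ω)).1 hdω)

theorem decoupling_Linfty_general (X : Type) [NormedAddCommGroup X] [NormedSpace ℝ X]
    [CompleteSpace X] [MeasurableSpace X] [BorelSpace X]
    (Ω : Type) (m0 : MeasurableSpace Ω) (μ : Measure Ω) [IsProbabilityMeasure μ]
    (ℱ : Filtration ℕ m0) (d e : ℕ → Ω → X)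
    (hd : IsMDS μ ℱ d)
    (hde : IsDecoupledTangent μ ℱ d e) (N : ℕ) (hN : 1 ≤ N) :
    essSup (fun ω => (‖∑ n ∈ Finset.Icc 1 N, d n ω‖₊ : ℝ≥0∞)) μ
      ≤ essSup (fun ω => (‖∑ n ∈ Finset.Icc 1 N, e n ω‖₊ : ℝ≥0∞)) μ := by
  obtain ⟨hd_adapted, -, -⟩ := hd
  obtain ⟨-, htan, hCI⟩ := hde
  set M := essSup (fun ω => (‖∑ n ∈ Finset.Icc 1 N, e n ω‖₊ : ℝ≥0∞)) μ
  set F := {x : Finset.Icc 1 N → X | (‖∑ n, x n‖₊ : ℝ≥0∞) ≤ M}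
  have hF : IsClosed F := isClosed_le (by fun_prop) continuous_const
  obtain ⟨S, hS, hdS⟩ : TopologicalSpace.IsSeparable
      (Set.range fun ω (n : Finset.Icc 1 N) => d n ω) :=
    (TopologicalSpace.isSeparable_pi fun n : Finset.Icc 1 N =>
      (hd_adapted n (Finset.mem_Icc.1 n.2).1).isSeparable_range).mono
      (Set.range_subset_iff.2 fun ω n => Set.mem_range_self ω)
  have he : ∀ᵐ ω ∂μ, (fun n : Finset.Icc 1 N => e n ω) ∈ F := by
    filter_upwards [ENNReal.ae_le_essSup fun ω => (‖∑ n ∈ Finset.Icc 1 N, e n ω‖₊ : ℝ≥0∞)]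
      with ω hω
    rwa [Set.mem_ofPred_eq, Finset.sum_coe_sort (Finset.Icc 1 N) (e · ω)]
  have hdF := ae_mem_of_measure_preimage_ball_ne_zero hS hdS (fun z _ _ =>
    ae_measure_preimage_ball_pi_ne_zero
      (fun n hn => ((hd_adapted n hn).mono (ℱ.le n)).measurable) htan hCI hN z
      Nat.one_div_pos_of_nat) hF he
  refine essSup_le_of_ae_le M ?_
  filter_upwards [hdF] with ω hω
  rwa [Set.mem_ofPred_eq, Finset.sum_coe_sort (Finset.Icc 1 N) (d · ω)] at hω

/-- In an arbitrary Banach space `X`, for every martingale difference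
sequence `(d n)` of essentially bounded random variables and every decoupled tangent
sequence `(e n)` of it, `ess sup ‖Σ_{n=1}^N d_n‖ ≤ ess sup ‖Σ_{n=1}^N e_n‖` for every
`N ≥ 1`: the decoupling inequality holds for `p = ∞` with constant `1`. -/
theorem decoupling_Linfty (X : Type) [NormedAddCommGroup X] [NormedSpace ℝ X]
    [CompleteSpace X] [MeasurableSpace X] [BorelSpace X]
    (Ω : Type) (m0 : MeasurableSpace Ω) (μ : Measure Ω) [IsProbabilityMeasure μ]
    (hμ : μ.IsComplete) (ℱ : Filtration ℕ m0) (d e : ℕ → Ω → X)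
    (hd : IsMDS μ ℱ d) (hbd : ∀ n, 1 ≤ n → MemLp (d n) ⊤ μ)
    (hde : IsDecoupledTangent μ ℱ d e) (N : ℕ) (hN : 1 ≤ N) :
    essSup (fun ω => (‖∑ n ∈ Finset.Icc 1 N, d n ω‖₊ : ℝ≥0∞)) μ
      ≤ essSup (fun ω => (‖∑ n ∈ Finset.Icc 1 N, e n ω‖₊ : ℝ≥0∞)) μ :=
  decoupling_Linfty_general X Ω m0 μ ℱ d e hd hde N hN
end
end
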